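/- Let K > 0. There is a constant A > 0 depending only on K such that the following holds for all integers n and N with n > 2(K+1)², 2 ≤ N ≤ n, and N³ ≤ n. Let φ_{ab} ∈ [0,π] (1 ≤ a < b ≤ N) be angles, define unit vectors u₁,…,u_N ∈ ℝ^n by (u_i)_k = cos(φ_{ki})·∏_{m=1}^{k−1} sin(φ_{mi}) for 1 ≤ k ≤ i−1, (u_i)_i = ∏_{m=1}^{i−1} sin(φ_{mi}), and (u_i)_k = 0 for k > i, and set t_{ij} = √n·(φ_{ij} − π/2) and α̃_{ij} = √n·(arccos(u_i·u_j) − π/2) for 1 ≤ i < j ≤ N. If |t_{ij}| ≤ K + 1 for all 1 ≤ i < j ≤ N, then |t_{ij} − α̃_{ij}| ≤ A·N/√n for all 1 ≤ i < j ≤ N. -/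

import Mathlib

/-!
Write `S = u_i · u_j` and `ε = (K + 1) / √n`, so that `|cos φ_ab| ≤ ε` for every pair.
Expanding the inner product in spherical coordinates, `S - cos φ_ij` is a sum of `i - 1` terms of
size at most `ε²` plus `cos φ_ij (P - 1)`, where `P` is a product of `i - 1` factors
`sin φ_mi sin φ_mj ∈ [1 - 2ε², 1]`; hence `|S - cos φ_ij| ≤ 3Nε²`. When `n ≥ 16N(K + 1)²` both
`S` and `cos φ_ij` lie in `[-1/2, 1/2]`, where `arccos` is `2`-Lipschitz, so
`t_ij - α̃_ij = √n (arccos (cos φ_ij) - arccos S)` is at most `6N(K + 1)²/√n`.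
Otherwise `√n < 16N(K + 1)²/√n`, and the trivial bound `|t_ij| + |α̃_ij| ≤ K + 1 + √n π/2` suffices.
-/

open Real Finset

/-- The i-th point of the sphere S^{n-1} ⊂ ℝⁿ in spherical coordinates:
u_i = (cos φ_{1i}, sin φ_{1i} cos φ_{2i}, …, sin φ_{1i}⋯sin φ_{i-1,i}, 0, …, 0).
Coordinates are 0-indexed: the k-th coordinate (k : Fin n) corresponds to index k+1. -/
noncomputable def sphVec (n : ℕ) (φ : ℕ → ℕ → ℝ) (i : ℕ) : Fin n → ℝ := fun k =>
  if (k : ℕ) + 1 < i then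
    Real.cos (φ ((k : ℕ) + 1) i) * ∏ m ∈ Finset.Icc 1 (k : ℕ), Real.sin (φ m i)
  else if (k : ℕ) + 1 = i then
    ∏ m ∈ Finset.Icc 1 (k : ℕ), Real.sin (φ m i)
  else 0

/-- α̃_{ij} = √n·(arccos(u_i·u_j) − π/2), where · is the standard inner product on ℝⁿ. -/
noncomputable def alphaTilde (n : ℕ) (φ : ℕ → ℕ → ℝ) (i j : ℕ) : ℝ :=
  Real.sqrt n * (Real.arccos (∑ k : Fin n, sphVec n φ i k * sphVec n φ j k) - Real.pi / 2)

lemma one_sub_card_mul_le_prod {ι : Type*} (s : Finset ι) {f : ι → ℝ} {δ : ℝ}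
    (h0 : ∀ m ∈ s, 0 ≤ f m) (h1 : ∀ m ∈ s, f m ≤ 1) (hf : ∀ m ∈ s, 1 - δ ≤ f m) :
    1 - #s * δ ≤ ∏ m ∈ s, f m := by
  classical
  induction s using Finset.induction_on with
  | empty => simp
  | insert a s ha ih =>
    simp only [forall_mem_insert] at h0 h1 hf
    have hprod := ih h0.2 h1.2 hf.2
    have hle : ∏ m ∈ s, f m ≤ 1 := prod_le_one h0.2 h1.2
    rw [prod_insert ha, card_insert_of_notMem ha]
    push_cast
    nlinarith [h0.1]

lemma abs_arccos_sub_arccos_le {x y : ℝ} (hx : |x| ≤ 1 / 2) (hy : |y| ≤ 1 / 2) :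
    |arccos x - arccos y| ≤ 2 * |x - y| := by
  have hderiv : ∀ z ∈ Set.Icc (-(1 / 2) : ℝ) (1 / 2),
      HasDerivWithinAt arccos (-(1 / √(1 - z ^ 2))) (Set.Icc (-(1 / 2)) (1 / 2)) z := by
    rintro z ⟨hz₁, hz₂⟩
    exact (hasDerivAt_arccos (by linarith) (by linarith)).hasDerivWithinAt
  have hbound : ∀ z ∈ Set.Icc (-(1 / 2) : ℝ) (1 / 2), ‖-(1 / √(1 - z ^ 2))‖ ≤ 2 := by
    rintro z ⟨hz₁, hz₂⟩
    have hsqrt : 1 / 2 ≤ √(1 - z ^ 2) := le_sqrt_of_sq_le (by nlinarith)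
    rw [norm_neg, norm_div, norm_one, Real.norm_of_nonneg (sqrt_nonneg _), div_le_iff₀ (by linarith)]
    linarith
  simpa only [Real.norm_eq_abs] using
    (convex_Icc _ _).norm_image_sub_le_of_norm_hasDerivWithin_le hderiv hbound
      (abs_le.1 hy) (abs_le.1 hx)

lemma abs_cos_le_of_abs_mul_sub_pi_div_two_le {s x c : ℝ} (hs : 0 < s)
    (h : |s * (x - π / 2)| ≤ c) : |cos x| ≤ c / s := by
  rw [abs_mul, abs_of_pos hs, ← le_div_iff₀' hs] at h
  rw [← abs_neg, ← sin_sub_pi_div_two]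
  exact abs_sin_le_abs.trans h

lemma one_sub_two_mul_sq_le_sin_mul_sin {x y ε : ℝ} (hx : 0 ≤ sin x) (hy : 0 ≤ sin y)
    (hcx : |cos x| ≤ ε) (hcy : |cos y| ≤ ε) : 1 - 2 * ε ^ 2 ≤ sin x * sin y := by
  have hcx2 : cos x ^ 2 ≤ ε ^ 2 := sq_le_sq.2 (hcx.trans (le_abs_self ε))
  have hcy2 : cos y ^ 2 ≤ ε ^ 2 := sq_le_sq.2 (hcy.trans (le_abs_self ε))
  -- `sin x sin y ≥ sin² x sin² y = (1 - cos² x)(1 - cos² y) ≥ 1 - cos² x - cos² y`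
  nlinarith [sin_sq_add_cos_sq x, sin_sq_add_cos_sq y, sin_le_one x, sin_le_one y,
    mul_nonneg hx hy, sq_nonneg (cos x), sq_nonneg (cos y)]

lemma abs_cos_mul_prod_sin_le {ι : Type*} (s : Finset ι) (f : ι → ℝ) {x ε : ℝ}
    (hx : |cos x| ≤ ε) : |cos x * ∏ m ∈ s, sin (f m)| ≤ ε := by
  have hprod : |∏ m ∈ s, sin (f m)| ≤ 1 := by
    rw [abs_prod]
    exact prod_le_one (fun _ _ => abs_nonneg _) fun _ _ => abs_sin_le_one _
  rw [abs_mul]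
  exact (mul_le_of_le_one_right (abs_nonneg _) hprod).trans hx

lemma sum_sphVec_mul_sphVec {n : ℕ} (φ : ℕ → ℕ → ℝ) {i j : ℕ} (hi : 1 ≤ i) (hij : i < j)
    (hjn : j ≤ n) :
    ∑ k : Fin n, sphVec n φ i k * sphVec n φ j k =
      ∑ k ∈ range (i - 1), (cos (φ (k + 1) i) * ∏ m ∈ Icc 1 k, sin (φ m i)) *
        (cos (φ (k + 1) j) * ∏ m ∈ Icc 1 k, sin (φ m j)) +
      (∏ m ∈ Icc 1 (i - 1), sin (φ m i)) * (cos (φ i j) * ∏ m ∈ Icc 1 (i - 1), sin (φ m j)) := by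
  set g : ℕ → ℝ := fun k =>
    (if k + 1 < i then cos (φ (k + 1) i) * ∏ m ∈ Icc 1 k, sin (φ m i)
      else if k + 1 = i then ∏ m ∈ Icc 1 k, sin (φ m i) else 0) *
    (if k + 1 < j then cos (φ (k + 1) j) * ∏ m ∈ Icc 1 k, sin (φ m j)
      else if k + 1 = j then ∏ m ∈ Icc 1 k, sin (φ m j) else 0)
  have hvanish : ∀ k ∈ range n, k ∉ range i → g k = 0 := by
    intro k _ hk
    simp only [mem_range, not_lt] at hk
    simp only [g, if_neg (show ¬ k + 1 < i by omega), if_neg (show k + 1 ≠ i by omega), zero_mul]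
  refine (Fin.sum_univ_eq_sum_range g n).trans ?_
  obtain ⟨i, rfl⟩ : ∃ i', i = i' + 1 := ⟨i - 1, by omega⟩
  rw [← sum_subset (range_subset_range.2 (by omega)) hvanish, sum_range_succ, Nat.add_sub_cancel]
  congr 1
  · refine sum_congr rfl fun k hk => ?_
    rw [mem_range] at hk
    simp only [g, if_pos (show k + 1 < i + 1 by omega), if_pos (show k + 1 < j by omega)]
  · simp only [g, lt_irrefl, if_false, if_true, if_pos (show i + 1 < j from hij)]

section SphericalCoordinates

variable {n : ℕ} {φ : ℕ → ℕ → ℝ} {i j : ℕ} {ε : ℝ}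

lemma abs_sum_sphVec_mul_sphVec_sub_cos_le (hi : 1 ≤ i) (hij : i < j) (hjn : j ≤ n)
    (hcos : ∀ a b, 1 ≤ a → a < b → b ≤ j → |cos (φ a b)| ≤ ε)
    (hsin : ∀ a b, 1 ≤ a → a < b → b ≤ j → 0 ≤ sin (φ a b)) :
    |∑ k : Fin n, sphVec n φ i k * sphVec n φ j k - cos (φ i j)| ≤ 3 * (i - 1 : ℕ) * ε ^ 2 := by
  rw [sum_sphVec_mul_sphVec φ hi hij hjn]
  set T := ∑ k ∈ range (i - 1), (cos (φ (k + 1) i) * ∏ m ∈ Icc 1 k, sin (φ m i)) *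
        (cos (φ (k + 1) j) * ∏ m ∈ Icc 1 k, sin (φ m j))
  have hT : |T| ≤ (i - 1 : ℕ) * ε ^ 2 := by
    have hterm : ∀ k ∈ range (i - 1), |(cos (φ (k + 1) i) * ∏ m ∈ Icc 1 k, sin (φ m i)) *
        (cos (φ (k + 1) j) * ∏ m ∈ Icc 1 k, sin (φ m j))| ≤ ε ^ 2 := by
      intro k hk
      rw [mem_range] at hk
      have hi' := abs_cos_mul_prod_sin_le (Icc 1 k) (φ · i)
        (hcos (k + 1) i (by omega) (by omega) (by omega))
      have hj' := abs_cos_mul_prod_sin_le (Icc 1 k) (φ · j)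
        (hcos (k + 1) j (by omega) (by omega) le_rfl)
      rw [abs_mul, sq]
      exact mul_le_mul hi' hj' (abs_nonneg _) ((abs_nonneg _).trans hi')
    calc |T| ≤ ∑ k ∈ range (i - 1), ε ^ 2 := (abs_sum_le_sum_abs _ _).trans (sum_le_sum hterm)
      _ = (i - 1 : ℕ) * ε ^ 2 := by rw [sum_const, card_range, nsmul_eq_mul]
  set P := ∏ m ∈ Icc 1 (i - 1), sin (φ m i) * sin (φ m j)
  have hP : |P - 1| ≤ (i - 1 : ℕ) * (2 * ε ^ 2) := by
    have hsin' : ∀ m ∈ Icc 1 (i - 1), 0 ≤ sin (φ m i) ∧ 0 ≤ sin (φ m j) := fun m hm => by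
      rw [mem_Icc] at hm
      exact ⟨hsin m i hm.1 (by omega) hij.le, hsin m j hm.1 (by omega) le_rfl⟩
    have hcos' : ∀ m ∈ Icc 1 (i - 1), |cos (φ m i)| ≤ ε ∧ |cos (φ m j)| ≤ ε := fun m hm => by
      rw [mem_Icc] at hm
      exact ⟨hcos m i hm.1 (by omega) hij.le, hcos m j hm.1 (by omega) le_rfl⟩
    have h0 : ∀ m ∈ Icc 1 (i - 1), 0 ≤ sin (φ m i) * sin (φ m j) := fun m hm =>
      mul_nonneg (hsin' m hm).1 (hsin' m hm).2
    have h1 : ∀ m ∈ Icc 1 (i - 1), sin (φ m i) * sin (φ m j) ≤ 1 := fun m hm =>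
      mul_le_one₀ (sin_le_one _) (hsin' m hm).2 (sin_le_one _)
    have hlower := one_sub_card_mul_le_prod (Icc 1 (i - 1)) h0 h1 fun m hm =>
      one_sub_two_mul_sq_le_sin_mul_sin (hsin' m hm).1 (hsin' m hm).2 (hcos' m hm).1 (hcos' m hm).2
    rw [Nat.card_Icc, Nat.add_sub_cancel] at hlower
    rw [abs_sub_comm, abs_of_nonneg (sub_nonneg.2 (prod_le_one h0 h1))]
    linarith
  have hsplit : T + (∏ m ∈ Icc 1 (i - 1), sin (φ m i)) *
      (cos (φ i j) * ∏ m ∈ Icc 1 (i - 1), sin (φ m j)) - cos (φ i j) =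
      T + cos (φ i j) * (P - 1) := by
    simp only [P, prod_mul_distrib]
    ring
  rw [hsplit]
  calc |T + cos (φ i j) * (P - 1)| ≤ |T| + 1 * |P - 1| := by
        refine (abs_add_le _ _).trans ?_
        rw [abs_mul]
        gcongr
        exact abs_cos_le_one _
    _ ≤ 3 * (i - 1 : ℕ) * ε ^ 2 := by nlinarith

lemma abs_sub_arccos_sum_sphVec_mul_sphVec_le (hi : 1 ≤ i) (hij : i < j) (hjn : j ≤ n)
    (hφ : φ i j ∈ Set.Icc 0 π)
    (hcos : ∀ a b, 1 ≤ a → a < b → b ≤ j → |cos (φ a b)| ≤ ε)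
    (hsin : ∀ a b, 1 ≤ a → a < b → b ≤ j → 0 ≤ sin (φ a b)) (hε : 16 * i * ε ^ 2 ≤ 1) :
    |φ i j - arccos (∑ k : Fin n, sphVec n φ i k * sphVec n φ j k)| ≤
      6 * (i - 1 : ℕ) * ε ^ 2 := by
  have hclose := abs_sum_sphVec_mul_sphVec_sub_cos_le hi hij hjn hcos hsin
  set S := ∑ k : Fin n, sphVec n φ i k * sphVec n φ j k
  have hcosij := hcos i j hi hij le_rfl
  have hε0 : 0 ≤ ε := (abs_nonneg _).trans hcosij
  have hi0 : (1 : ℝ) ≤ i := by exact_mod_cast hi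
  have hi1 : ((i - 1 : ℕ) : ℝ) ≤ i := by exact_mod_cast Nat.sub_le i 1
  have hε4 : ε ≤ 1 / 4 := by nlinarith
  have hdev : 3 * (i - 1 : ℕ) * ε ^ 2 ≤ 1 / 4 := by nlinarith [sq_nonneg ε]
  have hcos_half : |cos (φ i j)| ≤ 1 / 2 := by linarith
  have hS_half : |S| ≤ 1 / 2 := by linarith [abs_sub_abs_le_abs_sub S (cos (φ i j))]
  calc |φ i j - arccos S| = |arccos (cos (φ i j)) - arccos S| := by rw [arccos_cos hφ.1 hφ.2]
    _ ≤ 2 * |cos (φ i j) - S| := abs_arccos_sub_arccos_le hcos_half hS_half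
    _ = 2 * |S - cos (φ i j)| := by rw [abs_sub_comm]
    _ ≤ 6 * (i - 1 : ℕ) * ε ^ 2 := by linarith

end SphericalCoordinates

lemma abs_alphaTilde_le (n : ℕ) (φ : ℕ → ℕ → ℝ) (i j : ℕ) :
    |alphaTilde n φ i j| ≤ √n * (π / 2) := by
  rw [alphaTilde, abs_mul, abs_of_nonneg (sqrt_nonneg _)]
  gcongr
  exact abs_le.2 ⟨by linarith [arccos_nonneg (∑ k : Fin n, sphVec n φ i k * sphVec n φ j k)],
    by linarith [arccos_le_pi (∑ k : Fin n, sphVec n φ i k * sphVec n φ j k)]⟩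

lemma abs_sqrt_mul_sub_alphaTilde_le {n N : ℕ} {φ : ℕ → ℕ → ℝ} {c : ℝ} (hNn : N ≤ n)
    (hφ : ∀ a b, 1 ≤ a → a < b → b ≤ N → φ a b ∈ Set.Icc 0 π)
    (ht : ∀ a b, 1 ≤ a → a < b → b ≤ N → |√n * (φ a b - π / 2)| ≤ c)
    (hlarge : 16 * N * c ^ 2 ≤ n) {i j : ℕ} (hi : 1 ≤ i) (hij : i < j) (hj : j ≤ N) :
    |√n * (φ i j - π / 2) - alphaTilde n φ i j| ≤ 6 * N * c ^ 2 / √n := by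
  have hn : (0 : ℝ) < n := by exact_mod_cast (show 0 < n by omega)
  have hs : 0 < √n := sqrt_pos.2 hn
  have hcos : ∀ a b, 1 ≤ a → a < b → b ≤ j → |cos (φ a b)| ≤ c / √n := fun a b ha hab hb =>
    abs_cos_le_of_abs_mul_sub_pi_div_two_le hs (ht a b ha hab (hb.trans hj))
  have hsin : ∀ a b, 1 ≤ a → a < b → b ≤ j → 0 ≤ sin (φ a b) := fun a b ha hab hb =>
    sin_nonneg_of_nonneg_of_le_pi (hφ a b ha hab (hb.trans hj)).1 (hφ a b ha hab (hb.trans hj)).2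
  have hiN : (i : ℝ) ≤ N := by exact_mod_cast hij.le.trans hj
  have hε : (c / √n) ^ 2 = c ^ 2 / n := by rw [div_pow, sq_sqrt hn.le]
  have hεi : 16 * i * (c / √n) ^ 2 ≤ 1 := by
    rw [hε, mul_div_assoc', div_le_one hn]
    nlinarith [sq_nonneg c]
  have key := abs_sub_arccos_sum_sphVec_mul_sphVec_le hi hij (hj.trans hNn) (hφ i j hi hij hj)
    hcos hsin hεi
  have hi1 : ((i - 1 : ℕ) : ℝ) ≤ N := by rw [Nat.cast_sub hi]; push_cast; linarith
  rw [alphaTilde, ← mul_sub, sub_sub_sub_cancel_right, abs_mul, abs_of_pos hs, le_div_iff₀ hs]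
  calc √n * |φ i j - arccos (∑ k : Fin n, sphVec n φ i k * sphVec n φ j k)| * √n
      ≤ √n * (6 * (i - 1 : ℕ) * (c / √n) ^ 2) * √n := by gcongr
    _ = 6 * (i - 1 : ℕ) * c ^ 2 := by rw [div_pow]; field_simp
    _ ≤ 6 * N * c ^ 2 := by gcongr

/-- if all t_{ij} = √n(φ_{ij} − π/2) lie in [−K−1, K+1], then
|t_{ij} − α̃_{ij}| ≤ A·N/√n for all 1 ≤ i < j ≤ N. -/
theorem t_close_to_alphaTilde (K : ℝ) (hK : 0 < K) :
    ∃ A : ℝ, 0 < A ∧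
      ∀ (n N : ℕ), 2 * (K + 1) ^ 2 < (n : ℝ) → 2 ≤ N → N ≤ n → N ^ 3 ≤ n →
      ∀ φ : ℕ → ℕ → ℝ,
        (∀ a b : ℕ, 1 ≤ a → a < b → b ≤ N → φ a b ∈ Set.Icc 0 Real.pi) →
        (∀ i j : ℕ, 1 ≤ i → i < j → j ≤ N →
          |Real.sqrt n * (φ i j - Real.pi / 2)| ≤ K + 1) →
        ∀ i j : ℕ, 1 ≤ i → i < j → j ≤ N →
          |Real.sqrt n * (φ i j - Real.pi / 2) - alphaTilde n φ i j|
            ≤ A * (N : ℝ) / Real.sqrt n := by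
  refine ⟨50 * (K + 1) ^ 3, by positivity, ?_⟩
  intro n N _ _ hNn _ φ hφ ht i j hi hij hj
  have hn : (1 : ℝ) ≤ n := by exact_mod_cast (show 1 ≤ n by omega)
  have hs : 0 < √n := by positivity
  rcases le_or_gt (16 * N * (K + 1) ^ 2 : ℝ) n with hlarge | hsmall
  · refine (abs_sqrt_mul_sub_alphaTilde_le hNn hφ ht hlarge hi hij hj).trans ?_
    refine div_le_div_of_nonneg_right ?_ hs.le
    have hc : 0 ≤ (K + 1) ^ 2 * N * K := by positivity
    nlinarith
  · calc |√n * (φ i j - π / 2) - alphaTilde n φ i j| ≤ (K + 1) + √n * (π / 2) :=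
          (abs_sub _ _).trans (add_le_add (ht i j hi hij hj) (abs_alphaTilde_le n φ i j))
      _ ≤ 50 * (K + 1) ^ 3 * N / √n := by
          have hsn : √n ≤ n := by nlinarith [one_le_sqrt.2 hn, mul_self_sqrt (zero_le_one.trans hn)]
          rw [le_div_iff₀ hs]
          nlinarith [pi_le_four, mul_self_sqrt (zero_le_one.trans hn)]
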